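/- arXiv:2107.11873 — 3 statements merged into one kernel-verified Lean document; each statement's English description precedes it below -/
import Mathlib

section
/- Let 𝓔 be a state ensemble on a d-dimensional complex Hilbert space ℋ with finite label set X, and let Λ(𝓔) denote the largest among all eigenvalues of all the operators 𝓔(x), x ∈ X. If Pg(𝓔) = d·Λ(𝓔), then there exists a measurement M with outcome set X satisfying 𝓔(x)·M(x) = Λ(𝓔)·M(x) for all x ∈ X. -/
/-!
Since `Λ` bounds the spectrum of every `E x`, each `Λ • 1 - E x` is positive semidefinite, so for
every measurement `M` the gap `d * Λ - Pg E M = ∑ x, re tr ((Λ • 1 - E x) * M x)` is a sum of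
nonnegative terms. The set of measurements is compact, so some `M` attains `PgMax E = d * Λ`; then
every term vanishes, and `tr (P * Q) = 0` for positive semidefinite `P`, `Q` forces `P * Q = 0`.
-/

open scoped BigOperators
open Matrix
open scoped ComplexOrder

noncomputable section

abbrev Mat (d : ℕ) := Matrix (Fin d) (Fin d) ℂ

def IsStateEnsemble {d : ℕ} {X : Type*} [Fintype X] (E : X → Mat d) : Prop :=
  (∀ x, (E x).PosSemidef) ∧ (∑ x, (E x).trace) = 1

def IsMeasurement {d : ℕ} {Z : Type*} [Fintype Z] (M : Z → Mat d) : Prop :=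
  (∀ z, (M z).PosSemidef) ∧ (∑ z, M z) = 1

def IsScore {X Y : Type*} (f : X → Y → ℝ) : Prop :=
  ∀ x y, 0 ≤ f x y ∧ f x y ≤ 1

def IsPartialInfo {T X : Type*} [Fintype T] (α : T → X → ℝ) : Prop :=
  (∀ t x, 0 ≤ α t x) ∧ ∀ x, (∑ t, α t x) = 1

def IsPostProc {T Y Z : Type*} [Fintype Y] (ν : T → Y → Z → ℝ) : Prop :=
  (∀ t y z, 0 ≤ ν t y z) ∧ ∀ t z, (∑ y, ν t y z) = 1

def Pg {d : ℕ} {X : Type*} [Fintype X] (E M : X → Mat d) : ℝ :=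
  ∑ x, ((E x) * (M x)).trace.re

def PgMax {d : ℕ} {X : Type*} [Fintype X] (E : X → Mat d) : ℝ :=
  sSup {p : ℝ | ∃ M : X → Mat d, IsMeasurement M ∧ p = Pg E M}

def Escore {d : ℕ} {X Y : Type*} [Fintype X] [Fintype Y]
    (f : X → Y → ℝ) (E : X → Mat d) (M : Y → Mat d) : ℝ :=
  ∑ x, ∑ y, f x y * ((E x) * (M y)).trace.re

def EMax {d : ℕ} {X Y : Type*} [Fintype X] [Fintype Y]
    (f : X → Y → ℝ) (E : X → Mat d) : ℝ :=
  sSup {p : ℝ | ∃ M : Y → Mat d, IsMeasurement M ∧ p = Escore f E M}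

def Epost {d : ℕ} {X Y T Z : Type*} [Fintype X] [Fintype Y] [Fintype T] [Fintype Z]
    (f : X → Y → ℝ) (α : T → X → ℝ) (E : X → Mat d)
    (M : Z → Mat d) (ν : T → Y → Z → ℝ) : ℝ :=
  ∑ x, ∑ y, ∑ t, ∑ z, f x y * α t x * ν t y z * ((E x) * (M z)).trace.re

def EpostMax {d : ℕ} {X Y T : Type*} [Fintype X] [Fintype Y] [Fintype T]
    (f : X → Y → ℝ) (α : T → X → ℝ) (E : X → Mat d) : ℝ :=
  sSup {p : ℝ | ∃ (n : ℕ) (M : Fin n → Mat d) (ν : T → Y → Fin n → ℝ),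
    IsMeasurement M ∧ IsPostProc ν ∧ p = Epost f α E M ν}

def Eprior {d : ℕ} {X Y T : Type*} [Fintype X] [Fintype Y] [Fintype T]
    (f : X → Y → ℝ) (α : T → X → ℝ) (E : X → Mat d) (N : T → Y → Mat d) : ℝ :=
  ∑ x, ∑ y, ∑ t, f x y * α t x * ((E x) * (N t y)).trace.re

def EpriorMax {d : ℕ} {X Y T : Type*} [Fintype X] [Fintype Y] [Fintype T]
    (f : X → Y → ℝ) (α : T → X → ℝ) (E : X → Mat d) : ℝ :=
  sSup {p : ℝ | ∃ N : T → Y → Mat d, (∀ t, IsMeasurement (N t)) ∧ p = Eprior f α E N}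

def IsCompatible {d : ℕ} {T Y : Type*} [Fintype T] [Fintype Y] (N : T → Y → Mat d) : Prop :=
  ∃ (n : ℕ) (M : Fin n → Mat d) (ν : T → Y → Fin n → ℝ),
    IsMeasurement M ∧ IsPostProc ν ∧ ∀ t y, N t y = ∑ z, ν t y z • M z

def stdPost {T Y : Type*} [DecidableEq Y] : T → Y → (T → Y) → ℝ :=
  fun t y φ => if y = φ t then 1 else 0

def Δconst {d : ℕ} {X Y : Type*} [Fintype X] [Fintype Y]
    (f : X → Y → ℝ) (E : X → Mat d) : ℝ :=
  ∑ x, ∑ y, f x y * (E x).trace.re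

def auxEns {d : ℕ} {X Y : Type*} [Fintype X] [Fintype Y]
    (f : X → Y → ℝ) (E : X → Mat d) (y : Y) : Mat d :=
  (Δconst f E)⁻¹ • ∑ x, f x y • E x

def auxEnsPost {d : ℕ} {X Y T : Type*} [Fintype X] [Fintype Y] [Fintype T]
    (f : X → Y → ℝ) (α : T → X → ℝ) (E : X → Mat d) (φ : T → Y) : Mat d :=
  ((Fintype.card Y : ℝ) ^ (Fintype.card T - 1) * Δconst f E)⁻¹ •
    ∑ x, ∑ t, (f x (φ t) * α t x) • E x

namespace Matrix

variable {n 𝕜 : Type*} [Fintype n] [RCLike 𝕜]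

open scoped MatrixOrder in
theorem IsHermitian.posSemidef_smul_one_sub [DecidableEq n] {A : Matrix n n 𝕜}
    (hA : A.IsHermitian) {c : ℝ}
    (h : ∀ (l : ℝ) (v : n → 𝕜), v ≠ 0 → A *ᵥ v = (l : 𝕜) • v → l ≤ c) :
    ((c : 𝕜) • 1 - A).PosSemidef := by
  have hle : A ≤ algebraMap ℝ _ c := by
    refine le_algebraMap_of_spectrum_le (fun l hl => ?_) hA.isSelfAdjoint
    rw [hA.spectrum_real_eq_range_eigenvalues] at hl
    obtain ⟨i, rfl⟩ := hl
    refine h _ (hA.eigenvectorBasis i) ?_ ?_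
    · exact fun h0 => hA.eigenvectorBasis.orthonormal.ne_zero i (WithLp.ofLp_injective 2 h0)
    · rw [hA.mulVec_eigenvectorBasis, RCLike.real_smul_eq_coe_smul (K := 𝕜)]
  rw [Algebra.algebraMap_eq_smul_one, RCLike.real_smul_eq_coe_smul (K := 𝕜)] at hle
  exact le_iff.mp hle

theorem trace_conjTranspose_mul_self_mul_conjTranspose_mul_self (C D : Matrix n n 𝕜) :
    (Dᴴ * D * (Cᴴ * C)).trace = ((C * Dᴴ)ᴴ * (C * Dᴴ)).trace := by
  rw [conjTranspose_mul, conjTranspose_conjTranspose, Matrix.mul_assoc, trace_mul_comm,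
    Matrix.mul_assoc, Matrix.mul_assoc, Matrix.mul_assoc]

namespace PosSemidef

variable {A B : Matrix n n 𝕜}

open scoped MatrixOrder in
theorem trace_mul_nonneg (hA : A.PosSemidef) (hB : B.PosSemidef) : 0 ≤ (A * B).trace := by
  classical
  obtain ⟨D, rfl⟩ := CStarAlgebra.nonneg_iff_eq_star_mul_self.mp hA.nonneg
  obtain ⟨C, rfl⟩ := CStarAlgebra.nonneg_iff_eq_star_mul_self.mp hB.nonneg
  rw [star_eq_conjTranspose, star_eq_conjTranspose,
    trace_conjTranspose_mul_self_mul_conjTranspose_mul_self]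
  exact (posSemidef_conjTranspose_mul_self _).trace_nonneg

open scoped MatrixOrder in
theorem mul_eq_zero_of_trace_mul_eq_zero (hA : A.PosSemidef) (hB : B.PosSemidef)
    (h : (A * B).trace = 0) : A * B = 0 := by
  classical
  obtain ⟨D, rfl⟩ := CStarAlgebra.nonneg_iff_eq_star_mul_self.mp hA.nonneg
  obtain ⟨C, rfl⟩ := CStarAlgebra.nonneg_iff_eq_star_mul_self.mp hB.nonneg
  rw [star_eq_conjTranspose, star_eq_conjTranspose,
    trace_conjTranspose_mul_self_mul_conjTranspose_mul_self,
    trace_conjTranspose_mul_self_eq_zero_iff] at h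
  have hfactor : Dᴴ * D * (Cᴴ * C) = Dᴴ * (C * Dᴴ)ᴴ * C := by
    simp only [conjTranspose_mul, conjTranspose_conjTranspose, Matrix.mul_assoc]
  rw [star_eq_conjTranspose, star_eq_conjTranspose, hfactor, h, conjTranspose_zero,
    Matrix.mul_zero, Matrix.zero_mul]

theorem mul_eq_zero_of_re_trace_mul_eq_zero (hA : A.PosSemidef) (hB : B.PosSemidef)
    (h : RCLike.re (A * B).trace = 0) : A * B = 0 := by
  have him := (RCLike.nonneg_iff.mp (hA.trace_mul_nonneg hB)).2
  exact hA.mul_eq_zero_of_trace_mul_eq_zero hB (RCLike.ext (by simpa using h) (by simpa using him))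

end PosSemidef

end Matrix

theorem exists_isMeasurement {d : ℕ} {Z : Type*} [Fintype Z] [Nonempty Z] :
    ∃ M : Z → Mat d, IsMeasurement M := by
  classical
  obtain ⟨z₀⟩ := ‹Nonempty Z›
  refine ⟨Pi.single z₀ 1, fun z => ?_, by simp⟩
  rcases eq_or_ne z z₀ with rfl | hz
  · simpa using PosSemidef.one
  · simpa [hz] using PosSemidef.zero

open scoped MatrixOrder Matrix.Norms.L2Operator in
theorem isCompact_setOf_isMeasurement {d : ℕ} {Z : Type*} [Fintype Z] :
    IsCompact {M : Z → Mat d | IsMeasurement M} := by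
  have hsum : IsClosed {M : Z → Mat d | ∑ z, M z = 1} :=
    isClosed_eq (continuous_finsetSum _ fun z _ => continuous_apply z) continuous_const
  have hclosed : IsClosed {M : Z → Mat d | IsMeasurement M} := by
    have : {M : Z → Mat d | IsMeasurement M} =
        (⋂ z, (fun M : Z → Mat d => M z) ⁻¹' Set.Ici 0) ∩ {M | ∑ z, M z = 1} := by
      ext
      simp [IsMeasurement, Matrix.nonneg_iff_posSemidef]
    rw [this]
    exact (isClosed_iInter fun z => isClosed_Ici.preimage (continuous_apply z)).inter hsum
  refine Metric.isCompact_of_isClosed_isBounded hclosed ?_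
  refine (Metric.isBounded_iff_subset_closedBall 0).2 ⟨1, fun M hM => ?_⟩
  rw [mem_closedBall_zero_iff, pi_norm_le_iff_of_nonneg zero_le_one]
  intro z
  have hle : M z ≤ 1 :=
    hM.2 ▸ Finset.single_le_sum (fun z _ => (hM.1 z).nonneg) (Finset.mem_univ z)
  exact (CStarAlgebra.mem_Icc_iff_norm_le_one.mp ⟨(hM.1 z).nonneg, hle⟩).2

theorem continuous_Pg {d : ℕ} {X : Type*} [Fintype X] (E : X → Mat d) :
    Continuous (Pg E) := by
  unfold Pg
  fun_prop

theorem exists_isMeasurement_Pg_eq_PgMax {d : ℕ} {X : Type*} [Fintype X] [Nonempty X]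
    (E : X → Mat d) : ∃ M, IsMeasurement M ∧ Pg E M = PgMax E := by
  obtain ⟨M, hM, hmax⟩ := isCompact_setOf_isMeasurement.exists_isMaxOn exists_isMeasurement
    (continuous_Pg E).continuousOn
  refine ⟨M, hM, Eq.symm <| IsGreatest.csSup_eq ⟨⟨M, hM, rfl⟩, ?_⟩⟩
  rintro _ ⟨N, hN, rfl⟩
  exact hmax hN

theorem sum_re_trace_smul_one_sub_mul {d : ℕ} {X : Type*} [Fintype X] (E M : X → Mat d)
    (hM : IsMeasurement M) (c : ℝ) :
    ∑ x, (((c : ℂ) • 1 - E x) * M x).trace.re = c * d - Pg E M := by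
  have htrace : ∑ x, (M x).trace.re = d := by
    rw [← Complex.re_sum, ← trace_sum, hM.2, trace_one]
    simp
  simp only [Matrix.sub_mul, Matrix.smul_mul, Matrix.one_mul, trace_sub, trace_smul,
    smul_eq_mul, Complex.sub_re, Complex.re_ofReal_mul, Finset.sum_sub_distrib,
    ← Finset.mul_sum, htrace, Pg]

theorem stmt2 {d : ℕ} {X : Type} [Fintype X] (E : X → Mat d) (hE : IsStateEnsemble E)
    (Λ : ℝ)
    (hΛ : IsGreatest {l : ℝ | ∃ (x : X) (v : Fin d → ℂ),
      v ≠ 0 ∧ (E x).mulVec v = (l : ℂ) • v} Λ)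
    (hPg : PgMax E = d * Λ) :
    ∃ M : X → Mat d, IsMeasurement M ∧ ∀ x, E x * M x = (Λ : ℂ) • M x := by
  obtain ⟨x₀, -⟩ := hΛ.1
  have : Nonempty X := ⟨x₀⟩
  obtain ⟨M, hM, hMmax⟩ := exists_isMeasurement_Pg_eq_PgMax E
  have hgap : ∀ x, ((Λ : ℂ) • 1 - E x).PosSemidef := fun x =>
    (hE.1 x).isHermitian.posSemidef_smul_one_sub fun l v hv hl => hΛ.2 ⟨x, v, hv, hl⟩
  have hnonneg : ∀ x, 0 ≤ (((Λ : ℂ) • 1 - E x) * M x).trace.re := fun x =>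
    (RCLike.nonneg_iff.mp ((hgap x).trace_mul_nonneg (hM.1 x))).1
  have hsum : ∑ x, (((Λ : ℂ) • 1 - E x) * M x).trace.re = 0 := by
    rw [sum_re_trace_smul_one_sub_mul E M hM, hMmax, hPg]
    ring
  refine ⟨M, hM, fun x => ?_⟩
  have hx := (Finset.sum_eq_zero_iff_of_nonneg fun x _ => hnonneg x).1 hsum x (Finset.mem_univ x)
  have hzero := (hgap x).mul_eq_zero_of_re_trace_mul_eq_zero (hM.1 x) hx
  rw [Matrix.sub_mul, Matrix.smul_mul, Matrix.one_mul, sub_eq_zero] at hzero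
  exact hzero.symm
end
end

section
/- Reduction theorem for guessing games with posterior information: Let 𝓔 be a state ensemble on a finite-dimensional complex Hilbert space ℋ with finite label set X, let Y, T be finite sets, f : X × Y → [0,1] a score function, α a partial information map, and suppose Δ(𝓔,f) = Σ_{x,y} f(x,y)·tr[𝓔(x)] is nonzero. Define the auxiliary state ensemble 𝓔_{f,α} with label set Y^T by 𝓔_{f,α}(φ) = (|Y|^{|T|−1}·Δ(𝓔,f))^{-1} Σ_{x,t} f(x,φ(t))·α(t | x)·𝓔(x). Then 𝓔_{f,α} is a state ensemble and E^post_{f,α}(𝓔) = |Y|^{|T|−1}·Δ(𝓔,f)·Pg(𝓔_{f,α}). -/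
/-!
A measurement `M` followed by post-processing `ν` is simulated by the joint measurement
`W φ = ∑ z, (∏ t, ν t (φ t) z) • M z` with outcomes `φ : T → Y`, a guess for every possible piece
of posterior information: its `t`-marginal is exactly the measurement `∑ z, ν t · z • M z` used once
`t` is revealed, so it scores the same when followed by the trivial post-processing `φ ↦ φ t`.
Conversely every measurement on `T → Y` is such a strategy. The score of `W` is then linear in
`W`, with coefficient `∑ x t, f x (φ t) * α t x • E x = c • auxEnsPost f α E φ` at outcome `φ`,
so the optimal score is `c` times the guessing probability of `auxEnsPost f α E`. The constant
`c = |Y| ^ (|T| - 1) * Δ` is also what makes `auxEnsPost f α E` normalised, since each value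
`φ t = y` is attained by `|Y| ^ (|T| - 1)` functions `φ`.
-/

open scoped BigOperators
open Matrix
open scoped ComplexOrder

noncomputable section

open Finset

theorem Matrix.PosSemidef.trace_eq_re {n : Type*} [Fintype n] {A : Matrix n n ℂ}
    (hA : A.PosSemidef) : A.trace = (A.trace.re : ℂ) :=
  Complex.eq_re_of_ofReal_le (by exact_mod_cast hA.trace_nonneg)

theorem Matrix.PosSemidef.re_trace_nonneg {n : Type*} [Fintype n] {A : Matrix n n ℂ}
    (hA : A.PosSemidef) : 0 ≤ A.trace.re :=
  Complex.zero_le_real.1 (hA.trace_eq_re ▸ hA.trace_nonneg)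

section ProductMarginal

variable {T Y R : Type*} [Fintype T] [DecidableEq T] [Fintype Y] [DecidableEq Y] [CommSemiring R]

theorem sum_filter_apply_eq_prod (t : T) (y : Y) (p : T → Y → R) :
    ∑ φ : T → Y with φ t = y, ∏ t', p t' (φ t') = p t y * ∏ t' ∈ univ.erase t, ∑ y', p t' y' := by
  rw [← Fintype.piFinset_univ (β := fun _ : T => Y),
    ← Fintype.piFinset_update_singleton_eq_filter_piFinset_eq (fun _ => univ) t (mem_univ y),
    ← prod_univ_sum, ← mul_prod_erase univ _ (mem_univ t)]
  simp only [Function.update_self, sum_singleton]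
  congr 1
  exact prod_congr rfl fun t' ht' => by rw [Function.update_of_ne (ne_of_mem_erase ht')]

theorem card_filter_apply_eq (t : T) (y : Y) :
    #{φ : T → Y | φ t = y} = Fintype.card Y ^ (Fintype.card T - 1) := by
  simpa using Fintype.card_filter_piFinset_const_eq_of_mem univ t (mem_univ y)

end ProductMarginal

lemma isPostProc_stdPost {T Y : Type*} [Fintype Y] [DecidableEq Y] :
    IsPostProc (stdPost : T → Y → (T → Y) → ℝ) :=
  ⟨fun t y φ => by unfold stdPost; split_ifs <;> norm_num, fun t φ => by simp [stdPost]⟩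

section GuessingGames

variable {d : ℕ} {X Y T Z : Type*} [Fintype X] [Fintype Y] [Fintype T] [Fintype Z]

lemma sum_stdPost_smul [DecidableEq T] [DecidableEq Y] {M : Type*} [AddCommMonoid M]
    [Module ℝ M] (t : T) (y : Y) (W : (T → Y) → M) :
    ∑ φ, stdPost t y φ • W φ = ∑ φ : T → Y with φ t = y, W φ := by
  simp only [stdPost, ite_smul, one_smul, zero_smul, sum_filter, eq_comm]

lemma Δconst_nonneg {f : X → Y → ℝ} {E : X → Mat d} (hE : ∀ x, (E x).PosSemidef)
    (hf : ∀ x y, 0 ≤ f x y) : 0 ≤ Δconst f E :=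
  sum_nonneg fun x _ => sum_nonneg fun y _ => mul_nonneg (hf x y) (hE x).re_trace_nonneg

lemma card_pow_mul_Δconst_pos {f : X → Y → ℝ} {E : X → Mat d} (n : ℕ)
    (hE : ∀ x, (E x).PosSemidef) (hf : ∀ x y, 0 ≤ f x y) (hΔ : Δconst f E ≠ 0) :
    0 < (Fintype.card Y : ℝ) ^ n * Δconst f E := by
  have hΔpos : 0 < Δconst f E := (Δconst_nonneg hE hf).lt_of_ne' hΔ
  have : Nonempty Y := by
    by_contra hY
    rw [not_nonempty_iff] at hY
    exact hΔ (by simp [Δconst])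
  positivity

lemma Epost_eq_Eprior (f : X → Y → ℝ) (α : T → X → ℝ) (E : X → Mat d)
    (M : Z → Mat d) (ν : T → Y → Z → ℝ) :
    Epost f α E M ν = Eprior f α E (fun t y => ∑ z, ν t y z • M z) := by
  unfold Epost Eprior
  refine sum_congr rfl fun x _ => sum_congr rfl fun y _ => sum_congr rfl fun t _ => ?_
  simp only [Matrix.mul_smul, Matrix.trace_sum, Matrix.trace_smul,
    Complex.re_sum, Complex.smul_re, smul_eq_mul, mul_sum]
  exact sum_congr rfl fun z _ => by ring

lemma Epost_comp_equiv {Z' : Type*} [Fintype Z'] (e : Z' ≃ Z) (f : X → Y → ℝ) (α : T → X → ℝ)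
    (E : X → Mat d) (M : Z → Mat d) (ν : T → Y → Z → ℝ) :
    Epost f α E (M ∘ e) (fun t y => ν t y ∘ e) = Epost f α E M ν := by
  simp only [Epost_eq_Eprior, Function.comp_apply]
  congr! 3 with t y
  exact e.sum_comp (fun z => ν t y z • M z)

def jointMeas (M : Z → Mat d) (ν : T → Y → Z → ℝ) (φ : T → Y) : Mat d :=
  ∑ z, (∏ t, ν t (φ t) z) • M z

lemma sum_filter_jointMeas [DecidableEq T] [DecidableEq Y] {M : Z → Mat d}
    {ν : T → Y → Z → ℝ} (hν : IsPostProc ν) (t : T) (y : Y) :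
    ∑ φ : T → Y with φ t = y, jointMeas M ν φ = ∑ z, ν t y z • M z := by
  simp only [jointMeas]
  rw [sum_comm]
  refine sum_congr rfl fun z _ => ?_
  rw [← sum_smul, sum_filter_apply_eq_prod t y (fun t' y' => ν t' y' z)]
  simp [hν.2]

lemma IsMeasurement.jointMeas [DecidableEq T] {M : Z → Mat d} {ν : T → Y → Z → ℝ}
    (hM : IsMeasurement M) (hν : IsPostProc ν) :
    IsMeasurement (jointMeas M ν : (T → Y) → Mat d) := by
  refine ⟨fun φ => Matrix.posSemidef_sum _ fun z _ =>
    (hM.1 z).smul (prod_nonneg fun t _ => hν.1 t (φ t) z), ?_⟩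
  have hmass : ∀ z, ∑ φ : T → Y, ∏ t, ν t (φ t) z = 1 := fun z => by
    rw [← Fintype.prod_sum (fun t y => ν t y z)]
    simp [hν.2]
  simp only [_root_.jointMeas]
  rw [sum_comm]
  simpa only [← sum_smul, hmass, one_smul] using hM.2

lemma Epost_jointMeas [DecidableEq T] [DecidableEq Y] (f : X → Y → ℝ) (α : T → X → ℝ)
    (E : X → Mat d) {M : Z → Mat d} {ν : T → Y → Z → ℝ} (hν : IsPostProc ν) :
    Epost f α E (jointMeas M ν) stdPost = Epost f α E M ν := by
  simp only [Epost_eq_Eprior, sum_stdPost_smul, sum_filter_jointMeas hν]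

lemma EpostMax_eq_sSup_Epost_stdPost [DecidableEq T] [DecidableEq Y] (f : X → Y → ℝ)
    (α : T → X → ℝ) (E : X → Mat d) :
    EpostMax f α E = sSup {p : ℝ | ∃ W : (T → Y) → Mat d,
      IsMeasurement W ∧ p = Epost f α E W stdPost} := by
  unfold EpostMax
  congr 1
  ext p
  constructor
  · rintro ⟨n, M, ν, hM, hν, rfl⟩
    exact ⟨jointMeas M ν, hM.jointMeas hν, (Epost_jointMeas f α E hν).symm⟩
  · rintro ⟨W, hW, rfl⟩
    let e := (Fintype.equivFin (T → Y)).symm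
    refine ⟨_, W ∘ e, fun t y => stdPost t y ∘ e, ⟨fun z => hW.1 _, ?_⟩,
      ⟨fun t y z => isPostProc_stdPost.1 t y (e z), fun t z => isPostProc_stdPost.2 t (e z)⟩,
      (Epost_comp_equiv e f α E W stdPost).symm⟩
    rw [← hW.2]
    exact e.sum_comp W

lemma mul_Pg_auxEnsPost [DecidableEq T] [DecidableEq Y] {f : X → Y → ℝ} {α : T → X → ℝ}
    {E : X → Mat d} (hc : (Fintype.card Y : ℝ) ^ (Fintype.card T - 1) * Δconst f E ≠ 0)
    (W : (T → Y) → Mat d) :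
    (Fintype.card Y : ℝ) ^ (Fintype.card T - 1) * Δconst f E * Pg (auxEnsPost f α E) W
      = Epost f α E W stdPost := by
  have hPg : (Fintype.card Y : ℝ) ^ (Fintype.card T - 1) * Δconst f E * Pg (auxEnsPost f α E) W
      = ∑ φ : T → Y, ∑ x, ∑ t, f x (φ t) * α t x * (E x * W φ).trace.re := by
    unfold Pg auxEnsPost
    rw [mul_sum]
    refine sum_congr rfl fun φ _ => ?_
    rw [Matrix.smul_mul, Matrix.trace_smul, Complex.smul_re, smul_eq_mul, mul_inv_cancel_left₀ hc]
    simp only [sum_mul, Matrix.smul_mul, Matrix.trace_sum, Matrix.trace_smul, Complex.re_sum,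
      Complex.smul_re, smul_eq_mul]
  rw [hPg, Epost_eq_Eprior]
  simp only [sum_stdPost_smul, Eprior, mul_sum, Matrix.trace_sum, Complex.re_sum]
  rw [sum_comm]
  refine sum_congr rfl fun x _ => ?_
  rw [sum_comm, sum_comm (γ := Y)]
  refine sum_congr rfl fun t _ => (sum_fiberwise univ (· t) _).symm.trans
    (sum_congr rfl fun y _ => sum_congr rfl fun φ hφ => ?_)
  rw [(mem_filter.1 hφ).2]

lemma Epost_const_one_stdPost [DecidableEq T] [DecidableEq Y] (f : X → Y → ℝ) {α : T → X → ℝ}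
    (E : X → Mat d) (hα : ∀ x, ∑ t, α t x = 1) :
    Epost f α E (fun _ => 1) stdPost
      = (Fintype.card Y : ℝ) ^ (Fintype.card T - 1) * Δconst f E := by
  rw [Epost_eq_Eprior]
  simp only [sum_stdPost_smul, sum_const, card_filter_apply_eq, Eprior, Δconst,
    ← Nat.cast_smul_eq_nsmul ℝ, Matrix.mul_smul, mul_one, Matrix.trace_smul, Complex.smul_re,
    smul_eq_mul, mul_sum]
  refine sum_congr rfl fun x _ => sum_congr rfl fun y _ => ?_
  rw [← sum_mul, ← mul_sum, hα x]
  push_cast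
  ring

lemma isStateEnsemble_auxEnsPost [DecidableEq T] {f : X → Y → ℝ} {α : T → X → ℝ}
    {E : X → Mat d} (hE : ∀ x, (E x).PosSemidef) (hf : ∀ x y, 0 ≤ f x y)
    (hα : IsPartialInfo α) (hΔ : Δconst f E ≠ 0) :
    IsStateEnsemble (auxEnsPost f α E) := by
  classical
  have hc := card_pow_mul_Δconst_pos (Fintype.card T - 1) hE hf hΔ
  have hpsd : ∀ φ, (auxEnsPost f α E φ).PosSemidef := fun φ =>
    (Matrix.posSemidef_sum _ fun x _ => Matrix.posSemidef_sum _ fun t _ =>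
      (hE x).smul (mul_nonneg (hf x (φ t)) (hα.1 t x))).smul (inv_nonneg.2 hc.le)
  have hPg : Pg (auxEnsPost f α E) (fun _ => 1) = 1 := mul_left_cancel₀ hc.ne' <| by
    rw [mul_Pg_auxEnsPost hc.ne', Epost_const_one_stdPost f E hα.2, mul_one]
  refine ⟨hpsd, ?_⟩
  calc ∑ φ, (auxEnsPost f α E φ).trace = ((Pg (auxEnsPost f α E) fun _ => 1 : ℝ) : ℂ) := by
        simp only [Pg, mul_one, Complex.ofReal_sum, ← (hpsd _).trace_eq_re]
    _ = 1 := by rw [hPg, Complex.ofReal_one]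

end GuessingGames

theorem stmt9 {d : ℕ} {X Y T : Type} [Fintype X] [Fintype Y] [Fintype T] [DecidableEq T]
    (E : X → Mat d) (hE : IsStateEnsemble E)
    (f : X → Y → ℝ) (hf : IsScore f)
    (α : T → X → ℝ) (hα : IsPartialInfo α)
    (hΔ : Δconst f E ≠ 0) :
    IsStateEnsemble (auxEnsPost f α E) ∧
    EpostMax f α E
      = (Fintype.card Y : ℝ) ^ (Fintype.card T - 1) * Δconst f E
          * PgMax (auxEnsPost f α E) := by
  classical
  have hf₀ : ∀ x y, 0 ≤ f x y := fun x y => (hf x y).1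
  have hc := card_pow_mul_Δconst_pos (Fintype.card T - 1) hE.1 hf₀ hΔ
  refine ⟨isStateEnsemble_auxEnsPost hE.1 hf₀ hα hΔ, ?_⟩
  unfold PgMax
  rw [EpostMax_eq_sSup_Epost_stdPost, ← smul_eq_mul, ← Real.sSup_smul_of_nonneg hc.le]
  congr 1
  ext p
  simp only [Set.mem_smul_set, Set.mem_ofPred_eq, smul_eq_mul]
  constructor
  · rintro ⟨W, hW, rfl⟩
    exact ⟨_, ⟨W, hW, rfl⟩, mul_Pg_auxEnsPost hc.ne' W⟩
  · rintro ⟨_, ⟨W, hW, rfl⟩, rfl⟩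
    exact ⟨W, hW, mul_Pg_auxEnsPost hc.ne' W⟩
end
end

section
/- Qubit discrimination with deterministic posterior information: Fix θ ∈ (0, π/2], let a = (cos(θ/2), sin(θ/2), 0) and b = (cos(θ/2), −sin(θ/2), 0) in ℝ³, and let X = Y = {+a, −a, +b, −b}. Define the state ensemble on ℂ² by 𝓔(x) = (1/8)(𝟙 + x·σ), where x·σ = x₁σ₁ + x₂σ₂ + x₃σ₃ with σ₁, σ₂, σ₃ the Pauli matrices. Let T = {α-type, β-type}, τ(±a) = α-type, τ(±b) = β-type, the score function f_δ(x,y) = δ_{x,y}, and the partial information map α_τ(t | x) = δ_{τ(x),t}. Then the maximal average score with posterior information is E^post_{f_δ,α_τ}(𝓔) = (1/2)·(1 + √((1 + cos θ)/2)), while the maximal average score with prior information is E^prior_{f_δ,α_τ}(𝓔) = 1. -/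
open scoped BigOperators
open Matrix
open scoped ComplexOrder

noncomputable section

def pauli1 : Mat 2 := !![0, 1; 1, 0]
def pauli2 : Mat 2 := !![0, -Complex.I; Complex.I, 0]
def pauli3 : Mat 2 := !![1, 0; 0, -1]

def dotPauli (v : Fin 3 → ℝ) : Mat 2 :=
  (v 0 : ℂ) • pauli1 + (v 1 : ℂ) • pauli2 + (v 2 : ℂ) • pauli3

def labelVec (θ : ℝ) : Fin 4 → Fin 3 → ℝ :=
  ![![Real.cos (θ / 2), Real.sin (θ / 2), 0],
    -![Real.cos (θ / 2), Real.sin (θ / 2), 0],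
    ![Real.cos (θ / 2), -Real.sin (θ / 2), 0],
    -![Real.cos (θ / 2), -Real.sin (θ / 2), 0]]

def qubitEns (θ : ℝ) : Fin 4 → Mat 2 :=
  fun x => (8 : ℝ)⁻¹ • ((1 : Mat 2) + dotPauli (labelVec θ x))

def fdisc : Fin 4 → Fin 4 → ℝ := fun x y => if x = y then 1 else 0

def τpart : Fin 4 → Fin 2 := ![0, 0, 1, 1]

def ατ : Fin 2 → Fin 4 → ℝ := fun t x => if τpart x = t then 1 else 0

/-!
Writing `u = x₁ + i x₂`, each state is `𝓔(x) = ⅛ [[1, ū], [u, 1]]`, a quarter of a pure state.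
Knowing the pair `τ(x)` in advance, one measures along that pair's axis and identifies `x` with
certainty, so the prior score is `1`.

With posterior information, let the post-processing assign weights `w_x = ν_{τ(x)}(x | z)` to an
effect `M = M(z)`. Its contribution is `⅛ ((Σ w_x) tr M + 2 Re (W M₀₁))` with `W = Σ w_x u_x`.
The weights within each pair sum to at most `1`, and `|sin(θ/2)| ≤ cos(θ/2)`, so `|W| ≤ 2 cos(θ/2)`.
Positivity gives `2 |M₀₁| ≤ tr M`. Each effect therefore contributes at most
`(1 + cos(θ/2)) tr M / 4`, and the total is at most `(1 + cos(θ/2)) / 2` since `Σ_z tr M(z) = 2`.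
Measuring `σ₁` and guessing the state of the announced pair that lies on the observed side
attains this bound, and `cos(θ/2) = √((1 + cos θ)/2)`.
-/

namespace Matrix

lemma PosSemidef.trace_mul_nonneg_s17 {n : Type*} [Fintype n] {A B : Matrix n n ℂ}
    (hA : A.PosSemidef) (hB : B.PosSemidef) : 0 ≤ (A * B).trace := by
  obtain ⟨m, v, rfl⟩ := posSemidef_iff_eq_sum_vecMulVec.mp hA
  rw [Finset.sum_mul, trace_sum]
  refine Finset.sum_nonneg fun i _ => ?_
  rw [vecMulVec_mul, trace_vecMulVec, dotProduct_comm, ← dotProduct_mulVec]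
  exact hB.dotProduct_mulVec_nonneg (v i)

lemma PosSemidef.two_mul_norm_apply_zero_one_le {M : Mat 2} (hM : M.PosSemidef) :
    2 * ‖M 0 1‖ ≤ M.trace.re := by
  have h00 := Complex.nonneg_iff.mp (hM.diag_nonneg (i := 0))
  have h11 := Complex.nonneg_iff.mp (hM.diag_nonneg (i := 1))
  have h10 : M 1 0 = star (M 0 1) := (hM.1.apply 1 0).symm
  have hdet : ‖M 0 1‖ ^ 2 ≤ (M 0 0).re * (M 1 1).re := by
    have := (Complex.nonneg_iff.mp hM.det_nonneg).1
    rw [det_fin_two, h10, Complex.sub_re, Complex.mul_re, Complex.mul_re, ← h00.2, ← h11.2,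
      Complex.star_def, Complex.conj_re, Complex.conj_im] at this
    rw [← Complex.normSq_eq_norm_sq, Complex.normSq_apply]
    linarith
  rw [trace_fin_two, Complex.add_re]
  nlinarith [sq_nonneg ((M 0 0).re - (M 1 1).re), norm_nonneg (M 0 1)]

end Matrix

def equatorial (u : ℂ) : Mat 2 := !![1, star u; u, 1]

lemma one_add_dotPauli_of_apply_two_eq_zero {v : Fin 3 → ℝ} (hv : v 2 = 0) :
    1 + dotPauli v = equatorial ⟨v 0, v 1⟩ := by
  ext i j
  fin_cases i <;> fin_cases j <;>
    simp [dotPauli, pauli1, pauli2, pauli3, equatorial, hv, Complex.ext_iff]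

lemma trace_equatorial (u : ℂ) : (equatorial u).trace = 2 := by
  simp [equatorial, trace_fin_two]; norm_num

lemma equatorial_add_equatorial_neg (u : ℂ) : equatorial u + equatorial (-u) = (2 : ℝ) • 1 := by
  ext i j
  fin_cases i <;> fin_cases j <;> simp [equatorial, one_apply] <;> norm_num

lemma isHermitian_equatorial (u : ℂ) : (equatorial u).IsHermitian := by
  ext i j
  fin_cases i <;> fin_cases j <;> simp [equatorial]

lemma posSemidef_equatorial {u : ℂ} (hu : ‖u‖ = 1) : (equatorial u).PosSemidef := by
  have hvec : vecMulVec ![1, u] (star ![1, u]) = equatorial u := by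
    ext i j
    fin_cases i <;> fin_cases j <;>
      simp [equatorial, vecMulVec, Complex.mul_conj, Complex.normSq_eq_norm_sq, hu]
  exact hvec ▸ posSemidef_vecMulVec_self_star _

lemma re_trace_equatorial_mul {M : Mat 2} (hM : M.IsHermitian) (u : ℂ) :
    (equatorial u * M).trace.re = M.trace.re + 2 * (u * M 0 1).re := by
  have h10 : M 1 0 = star (M 0 1) := (hM.apply 1 0).symm
  simp [equatorial, trace_fin_two, vecMul, dotProduct, Fin.sum_univ_two, h10]
  ring

lemma re_trace_equatorial_mul_equatorial (u v : ℂ) :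
    (equatorial u * equatorial v).trace.re = 2 + 2 * (u * star v).re := by
  rw [re_trace_equatorial_mul (isHermitian_equatorial v), trace_equatorial]
  simp [equatorial]

def labelPhase (θ : ℝ) (x : Fin 4) : ℂ := ⟨labelVec θ x 0, labelVec θ x 1⟩

lemma qubitEns_eq_smul_equatorial (θ : ℝ) (x : Fin 4) :
    qubitEns θ x = (8 : ℝ)⁻¹ • equatorial (labelPhase θ x) := by
  rw [qubitEns, one_add_dotPauli_of_apply_two_eq_zero (by fin_cases x <;> simp [labelVec]),
    labelPhase]

lemma norm_labelPhase (θ : ℝ) (x : Fin 4) : ‖labelPhase θ x‖ = 1 := by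
  rw [Complex.norm_def, Real.sqrt_eq_one, Complex.normSq_apply]
  fin_cases x <;> simp [labelPhase, labelVec] <;> nlinarith [Real.sin_sq_add_cos_sq (θ / 2)]

lemma re_trace_qubitEns_mul {M : Mat 2} (hM : M.IsHermitian) (θ : ℝ) (x : Fin 4) :
    (qubitEns θ x * M).trace.re = 8⁻¹ * (M.trace.re + 2 * (labelPhase θ x * M 0 1).re) := by
  rw [qubitEns_eq_smul_equatorial, smul_mul_assoc, trace_smul, Complex.real_smul,
    Complex.re_ofReal_mul, re_trace_equatorial_mul hM]

lemma isStateEnsemble_qubitEns (θ : ℝ) : IsStateEnsemble (qubitEns θ) := by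
  refine ⟨fun x => ?_, ?_⟩
  · rw [qubitEns_eq_smul_equatorial]
    exact (posSemidef_equatorial (norm_labelPhase θ x)).smul (by norm_num)
  · simp only [qubitEns_eq_smul_equatorial, trace_smul, trace_equatorial, Fin.sum_univ_four]
    norm_num

lemma norm_sum_mul_labelPhase_le {θ : ℝ} (hθ : |Real.sin (θ / 2)| ≤ Real.cos (θ / 2))
    {w : Fin 4 → ℝ} (hw : ∀ x, 0 ≤ w x) (hα : w 0 + w 1 ≤ 1) (hβ : w 2 + w 3 ≤ 1) :
    ‖∑ x, (w x : ℂ) * labelPhase θ x‖ ≤ 2 * Real.cos (θ / 2) := by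
  set c := Real.cos (θ / 2)
  set s := Real.sin (θ / 2)
  have hc : 0 ≤ c := (abs_nonneg _).trans hθ
  have hsc : s ^ 2 ≤ c ^ 2 := sq_le_sq' (neg_le_of_abs_le hθ) (le_of_abs_le hθ)
  have hp : (w 0 - w 1) ^ 2 ≤ 1 := by nlinarith [hw 0, hw 1]
  have hq : (w 2 - w 3) ^ 2 ≤ 1 := by nlinarith [hw 2, hw 3]
  have hnormSq : Complex.normSq (∑ x, (w x : ℂ) * labelPhase θ x)
      = ((w 0 - w 1) + (w 2 - w 3)) ^ 2 * c ^ 2 + ((w 0 - w 1) - (w 2 - w 3)) ^ 2 * s ^ 2 := by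
    simp [Complex.normSq_apply, Fin.sum_univ_four, labelPhase, labelVec, c, s]
    ring
  rw [← abs_of_nonneg (norm_nonneg _), ← abs_of_nonneg (mul_nonneg zero_le_two hc), ← sq_le_sq,
    ← Complex.normSq_eq_norm_sq, hnormSq]
  nlinarith [mul_le_mul_of_nonneg_left hsc (sq_nonneg ((w 0 - w 1) - (w 2 - w 3))),
    mul_le_mul_of_nonneg_right hp (sq_nonneg c), mul_le_mul_of_nonneg_right hq (sq_nonneg c)]

section DeterministicInfo

variable {d : ℕ} {X T Z : Type*} [Fintype X] [DecidableEq X] [Fintype T] [DecidableEq T]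
  [Fintype Z] (τ : X → T) (E : X → Mat d)

lemma sum_delta_mul_sum_ite_mul (g : X → T → ℝ) (x : X) :
    ∑ y, (if x = y then (1 : ℝ) else 0) * ∑ t, (if τ x = t then 1 else 0) * g y t
      = g x (τ x) := by
  simp [ite_mul]

lemma epost_delta_deterministic (M : Z → Mat d) (ν : T → X → Z → ℝ) :
    Epost (fun x y => if x = y then 1 else 0) (fun t x => if τ x = t then 1 else 0) E M ν
      = ∑ z, ∑ x, ν (τ x) x z * (E x * M z).trace.re := by
  refine (Finset.sum_congr rfl fun x _ => ?_).trans Finset.sum_comm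
  beta_reduce
  simp only [mul_assoc, ← Finset.mul_sum]
  exact sum_delta_mul_sum_ite_mul τ (fun y t => ∑ z, ν t y z * (E x * M z).trace.re) x

lemma eprior_delta_deterministic (N : T → X → Mat d) :
    Eprior (fun x y => if x = y then 1 else 0) (fun t x => if τ x = t then 1 else 0) E N
      = ∑ x, (E x * N (τ x) x).trace.re := by
  refine Finset.sum_congr rfl fun x _ => ?_
  beta_reduce
  simp only [mul_assoc, ← Finset.mul_sum]
  exact sum_delta_mul_sum_ite_mul τ (fun y t => (E x * N t y).trace.re) x

end DeterministicInfo

lemma re_trace_mul_le_re_trace_of_isMeasurement {d : ℕ} {Y : Type*} [Fintype Y] {A : Mat d}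
    (hA : A.PosSemidef) {N : Y → Mat d} (hN : IsMeasurement N) (y : Y) :
    (A * N y).trace.re ≤ A.trace.re := by
  calc (A * N y).trace.re ≤ ∑ y', (A * N y').trace.re :=
        Finset.single_le_sum (fun y' _ => (Complex.nonneg_iff.mp
          (hA.trace_mul_nonneg_s17 (hN.1 y'))).1) (Finset.mem_univ y)
    _ = A.trace.re := by rw [← Complex.re_sum, ← trace_sum, ← Finset.mul_sum, hN.2, mul_one]

lemma isPostProc_ite {T Y Z : Type*} [Fintype Y] [DecidableEq Y] (g : T → Z → Y) :
    IsPostProc (fun t y z => if y = g t z then (1 : ℝ) else 0) :=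
  ⟨fun _ _ _ => by positivity, fun _ _ => by simp⟩

lemma sum_mul_re_trace_qubitEns_mul_le {θ : ℝ} (hθ : |Real.sin (θ / 2)| ≤ Real.cos (θ / 2))
    {M : Mat 2} (hM : M.PosSemidef)
    {w : Fin 4 → ℝ} (hw : ∀ x, 0 ≤ w x) (hα : w 0 + w 1 ≤ 1) (hβ : w 2 + w 3 ≤ 1) :
    ∑ x, w x * (qubitEns θ x * M).trace.re ≤ (1 + Real.cos (θ / 2)) / 4 * M.trace.re := by
  set W := ∑ x, (w x : ℂ) * labelPhase θ x
  have hsplit : ∑ x, w x * (qubitEns θ x * M).trace.re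
      = 8⁻¹ * ((∑ x, w x) * M.trace.re + 2 * (W * M 0 1).re) := by
    have hWre : (W * M 0 1).re = ∑ x, w x * (labelPhase θ x * M 0 1).re := by
      simp only [W, Finset.sum_mul, Complex.re_sum, mul_assoc, Complex.re_ofReal_mul]
    simp only [re_trace_qubitEns_mul hM.1, hWre, Finset.mul_sum, Finset.sum_mul,
      ← Finset.sum_add_distrib]
    exact Finset.sum_congr rfl fun x _ => by ring
  have hW : (W * M 0 1).re ≤ Real.cos (θ / 2) * M.trace.re :=
    calc (W * M 0 1).re ≤ ‖W‖ * ‖M 0 1‖ := (Complex.re_le_norm _).trans (norm_mul _ _).le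
      _ ≤ 2 * Real.cos (θ / 2) * (M.trace.re / 2) := mul_le_mul
          (norm_sum_mul_labelPhase_le hθ hw hα hβ)
          (by linarith [hM.two_mul_norm_apply_zero_one_le]) (norm_nonneg _)
          (by linarith [(abs_nonneg _).trans hθ])
      _ = Real.cos (θ / 2) * M.trace.re := by ring
  have hT : 0 ≤ M.trace.re := (Complex.nonneg_iff.mp hM.trace_nonneg).1
  have hw_sum : (∑ x, w x) * M.trace.re ≤ 2 * M.trace.re :=
    mul_le_mul_of_nonneg_right (by rw [Fin.sum_univ_four]; linarith) hT
  rw [hsplit]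
  linarith

lemma epost_qubitEns_le {θ : ℝ} (hθ : |Real.sin (θ / 2)| ≤ Real.cos (θ / 2)) {n : ℕ}
    {M : Fin n → Mat 2} {ν : Fin 2 → Fin 4 → Fin n → ℝ} (hM : IsMeasurement M)
    (hν : IsPostProc ν) :
    Epost fdisc ατ (qubitEns θ) M ν ≤ 1 / 2 * (1 + Real.cos (θ / 2)) := by
  calc Epost fdisc ατ (qubitEns θ) M ν
      = ∑ z, ∑ x, ν (τpart x) x z * (qubitEns θ x * M z).trace.re :=
        epost_delta_deterministic τpart _ M ν
    _ ≤ ∑ z, (1 + Real.cos (θ / 2)) / 4 * (M z).trace.re := by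
        refine Finset.sum_le_sum fun z _ => sum_mul_re_trace_qubitEns_mul_le hθ (hM.1 z)
          (fun x => hν.1 _ _ _) ?_ ?_
        · show ν 0 0 z + ν 0 1 z ≤ 1
          have := hν.2 0 z
          rw [Fin.sum_univ_four] at this
          linarith [hν.1 0 2 z, hν.1 0 3 z]
        · show ν 1 2 z + ν 1 3 z ≤ 1
          have := hν.2 1 z
          rw [Fin.sum_univ_four] at this
          linarith [hν.1 1 0 z, hν.1 1 1 z]
    _ = 1 / 2 * (1 + Real.cos (θ / 2)) := by
        rw [← Finset.mul_sum, ← Complex.re_sum, ← trace_sum, hM.2]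
        norm_num [trace_one]
        ring

def postMeas : Fin 2 → Mat 2 := ![(2 : ℝ)⁻¹ • equatorial 1, (2 : ℝ)⁻¹ • equatorial (-1)]

-- On outcome `z` of the `σ₁` measurement, guess the state of the announced pair on that side.
def postGuess : Fin 2 → Fin 2 → Fin 4 := ![![0, 1], ![2, 3]]

lemma isMeasurement_postMeas : IsMeasurement postMeas := by
  refine ⟨fun z => ?_, ?_⟩
  · fin_cases z <;> exact (posSemidef_equatorial (by simp)).smul (by norm_num)
  · rw [Fin.sum_univ_two]
    simp only [postMeas, Matrix.cons_val_zero, Matrix.cons_val_one, ← smul_add,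
      equatorial_add_equatorial_neg, smul_smul]
    norm_num

lemma epost_qubitEns_postMeas (θ : ℝ) :
    Epost fdisc ατ (qubitEns θ) postMeas (fun t y z => if y = postGuess t z then 1 else 0)
      = 1 / 2 * (1 + Real.cos (θ / 2)) := by
  refine (epost_delta_deterministic τpart _ _ _).trans ?_
  simp [Fin.sum_univ_two, Fin.sum_univ_four, postGuess, τpart, postMeas,
    qubitEns_eq_smul_equatorial, re_trace_equatorial_mul_equatorial, labelPhase, labelVec]
  ring

lemma eprior_qubitEns_le (θ : ℝ) {N : Fin 2 → Fin 4 → Mat 2} (hN : ∀ t, IsMeasurement (N t)) :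
    Eprior fdisc ατ (qubitEns θ) N ≤ 1 := by
  have hE := isStateEnsemble_qubitEns θ
  calc Eprior fdisc ατ (qubitEns θ) N = ∑ x, (qubitEns θ x * N (τpart x) x).trace.re :=
        eprior_delta_deterministic τpart _ N
    _ ≤ ∑ x, (qubitEns θ x).trace.re := Finset.sum_le_sum fun x _ =>
        re_trace_mul_le_re_trace_of_isMeasurement (hE.1 x) (hN (τpart x)) x
    _ = 1 := by rw [← Complex.re_sum, hE.2, Complex.one_re]

def priorMeas (θ : ℝ) (t : Fin 2) (y : Fin 4) : Mat 2 :=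
  if τpart y = t then (2 : ℝ)⁻¹ • equatorial (labelPhase θ y) else 0

lemma isMeasurement_priorMeas (θ : ℝ) (t : Fin 2) : IsMeasurement (priorMeas θ t) := by
  refine ⟨fun y => ?_, ?_⟩
  · unfold priorMeas
    split_ifs
    · exact (posSemidef_equatorial (norm_labelPhase θ y)).smul (by norm_num)
    · exact .zero
  · have h1 : labelPhase θ 1 = -labelPhase θ 0 := by simp [labelPhase, labelVec, Complex.ext_iff]
    have h3 : labelPhase θ 3 = -labelPhase θ 2 := by simp [labelPhase, labelVec, Complex.ext_iff]
    fin_cases t <;>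
      simp [Fin.sum_univ_four, priorMeas, τpart, h1, h3, ← smul_add,
        equatorial_add_equatorial_neg, smul_smul]

lemma eprior_qubitEns_priorMeas (θ : ℝ) : Eprior fdisc ατ (qubitEns θ) (priorMeas θ) = 1 := by
  refine (eprior_delta_deterministic τpart _ _).trans ?_
  simp [priorMeas, qubitEns_eq_smul_equatorial,
    re_trace_equatorial_mul_equatorial, Complex.mul_conj, Complex.normSq_eq_norm_sq,
    norm_labelPhase]
  norm_num

lemma abs_sin_half_le_cos_half {θ : ℝ} (hθ : θ ∈ Set.Icc (-(Real.pi / 2)) (Real.pi / 2)) :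
    |Real.sin (θ / 2)| ≤ Real.cos (θ / 2) := by
  have hcos : 0 ≤ Real.cos θ := Real.cos_nonneg_of_mem_Icc hθ
  have hcos_half : 0 ≤ Real.cos (θ / 2) :=
    Real.cos_nonneg_of_mem_Icc ⟨by linarith [hθ.1, Real.pi_pos], by linarith [hθ.2, Real.pi_pos]⟩
  have hdouble : Real.cos θ = Real.cos (θ / 2) ^ 2 - Real.sin (θ / 2) ^ 2 := by
    rw [← Real.cos_two_mul', mul_div_cancel₀ θ two_ne_zero]
  rw [← abs_of_nonneg hcos_half, ← sq_le_sq]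
  linarith

theorem stmt17 (θ : ℝ) (hθ : θ ∈ Set.Ioc 0 (Real.pi / 2)) :
    EpostMax fdisc ατ (qubitEns θ)
        = (1 / 2) * (1 + Real.sqrt ((1 + Real.cos θ) / 2)) ∧
    EpriorMax fdisc ατ (qubitEns θ) = 1 := by
  obtain ⟨hθ0, hθ2⟩ := hθ
  have hπ := Real.pi_pos
  have hhalf : |Real.sin (θ / 2)| ≤ Real.cos (θ / 2) := abs_sin_half_le_cos_half ⟨by linarith, hθ2⟩
  rw [← Real.cos_half (by linarith) (by linarith)]
  refine ⟨IsGreatest.csSup_eq ⟨?_, ?_⟩, IsGreatest.csSup_eq ⟨?_, ?_⟩⟩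
  · exact ⟨2, postMeas, _, isMeasurement_postMeas, isPostProc_ite postGuess,
      (epost_qubitEns_postMeas θ).symm⟩
  · rintro p ⟨n, M, ν, hM, hν, rfl⟩
    exact epost_qubitEns_le hhalf hM hν
  · exact ⟨priorMeas θ, isMeasurement_priorMeas θ, (eprior_qubitEns_priorMeas θ).symm⟩
  · rintro p ⟨N, hN, rfl⟩
    exact eprior_qubitEns_le θ hN
end
end
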